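/- arXiv:1305.6646 — 3 statements merged into one kernel-verified Lean document; each statement's English description precedes it below -/
import Mathlib

section
/- For any vector x ∈ ℝⁿ with all partial sums of squares nonzero where the summand is defined, it holds that ∑_{i=1}^n x_i² / √(∑_{j=1}^i x_j²) ≤ 2 √(∑_{i=1}^n x_i²), where terms with zero denominator are interpreted as zero. -/
open Finset

lemma aux_div_le (a b : ℝ) (ha : 0 ≤ a) (hab : a ≤ b) :
    (b - a) / Real.sqrt b ≤ 2 * (Real.sqrt b - Real.sqrt a) := by
  have hb : 0 ≤ b := ha.trans hab
  rcases eq_or_lt_of_le hb with h | h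
  · have : a = 0 := le_antisymm (hab.trans h.symm.le) ha
    simp [← h, this]
  · have hsb : 0 < Real.sqrt b := Real.sqrt_pos.2 h
    rw [div_le_iff₀ hsb]
    have h1 : Real.sqrt a ^ 2 = a := Real.sq_sqrt ha
    have h2 : Real.sqrt b ^ 2 = b := Real.sq_sqrt hb
    nlinarith [sq_nonneg (Real.sqrt a - Real.sqrt b), Real.sqrt_nonneg a]

lemma sum_Iic_eq (n : ℕ) (x : Fin n → ℝ) (i : Fin n) :
    ∑ j ∈ Finset.Iic i, x j ^ 2
      = ∑ j ∈ Finset.range ((i : ℕ) + 1), (if h : j < n then x ⟨j, h⟩ ^ 2 else 0) := by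
  refine Finset.sum_nbij' (fun j => (j : ℕ)) (fun j => if h : j < n then ⟨j, h⟩ else i)
      ?_ ?_ ?_ ?_ ?_
  · intro j hj
    simp only [Finset.mem_Iic] at hj
    simpa [Nat.lt_succ_iff] using (Fin.le_def.1 hj)
  · intro j hj
    simp only [Finset.mem_range, Nat.lt_succ_iff] at hj
    have hjn : j < n := lt_of_le_of_lt hj i.2
    simp [hjn, Finset.mem_Iic, Fin.le_def, hj]
  · intro j _; simp
  · intro j hj
    simp only [Finset.mem_range, Nat.lt_succ_iff] at hj
    have hjn : j < n := lt_of_le_of_lt hj i.2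
    simp [hjn]
  · intro j hj
    simp only [Finset.mem_Iic] at hj
    have := (Fin.le_def.1 hj)
    simp [j.2]

/-- Lemma 3 of the paper: for any vector `x ∈ ℝⁿ`,
`∑_{i=1}^n x_i² / √(∑_{j=1}^i x_j²) ≤ 2 √(∑_{i=1}^n x_i²)`,
where terms with zero denominator are interpreted as zero
(in Lean division by zero is zero, so this is automatic). -/
theorem stmt_0 (n : ℕ) (x : Fin n → ℝ) :
    ∑ i : Fin n, x i ^ 2 / Real.sqrt (∑ j ∈ Finset.Iic i, x j ^ 2) ≤
      2 * Real.sqrt (∑ i : Fin n, x i ^ 2) := by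
  set g : ℕ → ℝ := fun j => if h : j < n then x ⟨j, h⟩ ^ 2 else 0 with hg
  have hg0 : ∀ j, 0 ≤ g j := by
    intro j; simp only [hg]; split <;> positivity
  set S : ℕ → ℝ := fun k => ∑ j ∈ Finset.range k, g j with hS
  have hSmono : ∀ k, S k ≤ S (k + 1) := by
    intro k
    simp only [hS, Finset.sum_range_succ]
    nlinarith [hg0 k]
  have hS0 : ∀ k, 0 ≤ S k := fun k => Finset.sum_nonneg fun j _ => hg0 j
  have hmain : ∑ i : Fin n, x i ^ 2 / Real.sqrt (∑ j ∈ Finset.Iic i, x j ^ 2)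
      = ∑ k ∈ Finset.range n, g k / Real.sqrt (S (k + 1)) := by
    rw [← Fin.sum_univ_eq_sum_range]
    refine Finset.sum_congr rfl fun i _ => ?_
    rw [sum_Iic_eq n x i]
    simp [hg, hS, i.2]
  rw [hmain]
  have hSn : (∑ i : Fin n, x i ^ 2) = S n := by
    simp only [hS]
    rw [← Fin.sum_univ_eq_sum_range]
    refine Finset.sum_congr rfl fun i _ => ?_
    simp [hg, i.2]
  rw [hSn]
  have key : ∀ k ∈ Finset.range n,
      g k / Real.sqrt (S (k + 1)) ≤ 2 * (Real.sqrt (S (k + 1)) - Real.sqrt (S k)) := by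
    intro k _
    have hgk : g k = S (k + 1) - S k := by simp [hS, Finset.sum_range_succ]
    rw [hgk]
    exact aux_div_le _ _ (hS0 k) (hSmono k)
  calc ∑ k ∈ Finset.range n, g k / Real.sqrt (S (k + 1))
      ≤ ∑ k ∈ Finset.range n, 2 * (Real.sqrt (S (k + 1)) - Real.sqrt (S k)) :=
        Finset.sum_le_sum key
    _ = 2 * (Real.sqrt (S n) - Real.sqrt (S 0)) := by
        rw [← Finset.mul_sum, Finset.sum_range_sub (fun k => Real.sqrt (S k))]
    _ = 2 * Real.sqrt (S n) := by simp [hS]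
end

section
/- Let C > 0, let S be diagonal positive definite, let g_t ∈ ℝᵈ, and let A_t be the diagonal matrices A_{t,ii} = (1/(C√2)) √((∑_{j=1}^t g_{ji}²)/S_ii) (where terms with zero numerator are skipped). Suppose w_1 = 0 and w_{t+1} = Π^{A_t}(w_t − A_t^{-1} g_t), where Π^{A_t} projects onto W = {w : ‖S^{-1/2} w‖_q ≤ C} in the norm induced by A_t, and suppose ℓ_t are convex losses with g_t ∈ ∂ℓ_t(w_t). Then for any w* ∈ W, ∑_{t=1}^T (ℓ_t(w_t) − ℓ_t(w*)) ≤ 2√2 C ∑_{i=1}^d √(S_ii ∑_{j=1}^T g_{ji}²). -/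
open Finset Matrix


/-- ∑ a_t/√(G_t) ≤ 2√(G_T) -/
lemma aux_sum_div_sqrt (a : ℕ → ℝ) (ha : ∀ j, 0 ≤ a j) (T : ℕ) :
    ∑ t ∈ Icc 1 T, a t / Real.sqrt (∑ j ∈ Icc 1 t, a j) ≤
      2 * Real.sqrt (∑ j ∈ Icc 1 T, a j) := by
  induction T with
  | zero => simp
  | succ T ih =>
    rw [Finset.sum_Icc_succ_top (by omega), Finset.sum_Icc_succ_top (Nat.one_le_iff_ne_zero.mpr (by omega))]
    set G := ∑ j ∈ Icc 1 T, a j with hG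
    have hGnn : 0 ≤ G := Finset.sum_nonneg fun j _ => ha j
    have hG'nn : 0 ≤ G + a (T+1) := add_nonneg hGnn (ha _)
    have key : a (T+1) / Real.sqrt (G + a (T+1)) ≤
        2 * Real.sqrt (G + a (T+1)) - 2 * Real.sqrt G := by
      rcases eq_or_lt_of_le hG'nn with h0 | h0
      · have ha0 : a (T+1) = 0 := by nlinarith [ha (T+1)]
        have : G = 0 := by nlinarith
        simp [ha0, this]
      · rw [div_le_iff₀ (Real.sqrt_pos.mpr h0)]
        have h1 : 2 * (Real.sqrt G * Real.sqrt (G + a (T+1))) ≤ G + (G + a (T+1)) := by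
          nlinarith [Real.sq_sqrt hGnn, Real.sq_sqrt hG'nn,
            sq_nonneg (Real.sqrt G - Real.sqrt (G + a (T+1)))]
        have h2 : Real.sqrt (G + a (T+1)) ^ 2 = G + a (T+1) := Real.sq_sqrt hG'nn
        nlinarith [Real.sqrt_nonneg (G + a (T+1))]
    have := ih
    push_cast at *
    linarith

/-- telescoping bound -/
lemma aux_tele (A B : ℕ → ℝ) (D : ℝ) (hA0 : A 0 = 0)
    (hAmono : ∀ t, A t ≤ A (t+1)) (hApos : ∀ t, 0 ≤ A t) (hB : ∀ t, 0 ≤ B t)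
    (T : ℕ) (hBD : ∀ t ∈ Icc 1 T, B t ≤ D) :
    ∑ t ∈ Icc 1 T, A t * (B t - B (t+1)) ≤ A T * D := by
  have main : ∀ T : ℕ, (∀ t ∈ Icc 1 T, B t ≤ D) →
      ∑ t ∈ Icc 1 T, A t * (B t - B (t+1)) ≤ A T * D - A T * B (T+1) := by
    intro T hBD
    induction T with
    | zero => simp [hA0]
    | succ T ih =>
      have hsub : ∀ t ∈ Icc 1 T, B t ≤ D := fun t ht => hBD t (by
        simp only [Finset.mem_Icc] at ht ⊢; omega)
      have h1 := ih hsub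
      rw [Finset.sum_Icc_succ_top (by omega)]
      have h2 : A T ≤ A (T+1) := hAmono T
      have h3 : B (T+1) ≤ D := hBD (T+1) (by simp)
      nlinarith [hApos T, hApos (T+1), hB (T+1), hB (T+2)]
  have h := main T hBD
  nlinarith [hApos T, hB (T+1)]

lemma aux_proj_contract {d : ℕ} (A y p z : Fin d → ℝ) (hA : ∀ i, 0 ≤ A i)
    (W : Set (Fin d → ℝ)) (hWc : Convex ℝ W) (hp : p ∈ W) (hz : z ∈ W)
    (hmin : ∀ u ∈ W, ∑ i, A i * (p i - y i) ^ 2 ≤ ∑ i, A i * (u i - y i) ^ 2) :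
    ∑ i, A i * (z i - p i) ^ 2 ≤ ∑ i, A i * (z i - y i) ^ 2 := by
  set B : ℝ := ∑ i, A i * ((p i - y i) * (z i - p i)) with hB
  set Dq : ℝ := ∑ i, A i * (z i - p i) ^ 2 with hDq
  have hDqnn : 0 ≤ Dq := Finset.sum_nonneg fun i _ => mul_nonneg (hA i) (sq_nonneg _)
  have hlam : ∀ lam : ℝ, 0 ≤ lam → lam ≤ 1 → 0 ≤ 2 * lam * B + lam ^ 2 * Dq := by
    intro lam h0 h1
    have hmem : (1 - lam) • p + lam • z ∈ W := hWc hp hz (by linarith) h0 (by ring)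
    have heq : (fun i => p i + lam * (z i - p i)) = (1 - lam) • p + lam • z := by
      funext i
      simp only [Pi.add_apply, Pi.smul_apply, smul_eq_mul]
      ring
    have h2 := hmin _ (heq ▸ hmem)
    have expand : ∑ i, A i * ((fun i => p i + lam * (z i - p i)) i - y i) ^ 2
        = (∑ i, A i * (p i - y i) ^ 2) + (2 * lam * B + lam ^ 2 * Dq) := by
      rw [hB, hDq, Finset.mul_sum, Finset.mul_sum, ← Finset.sum_add_distrib,
        ← Finset.sum_add_distrib]
      exact Finset.sum_congr rfl fun i _ => by ring
    rw [expand] at h2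
    linarith
  have hBnn : 0 ≤ B := by
    by_contra h
    push_neg at h
    rcases eq_or_lt_of_le hDqnn with hD0 | hD0
    · have := hlam 1 zero_le_one le_rfl
      nlinarith
    · set lam := min 1 (-B / Dq) with hlamdef
      have hl0 : 0 < lam := lt_min one_pos (div_pos (neg_pos.mpr h) hD0)
      have hl1 : lam ≤ 1 := min_le_left _ _
      have hmain := hlam lam hl0.le hl1
      have hle : lam * Dq ≤ -B := by
        have h3 : lam ≤ -B / Dq := min_le_right _ _
        have := mul_le_mul_of_nonneg_right h3 hD0.le
        rwa [div_mul_cancel₀ _ (ne_of_gt hD0)] at this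
      nlinarith
  have expand2 : ∑ i, A i * (z i - y i) ^ 2
      = Dq + 2 * B + ∑ i, A i * (p i - y i) ^ 2 := by
    rw [hB, hDq, Finset.mul_sum, ← Finset.sum_add_distrib,
      ← Finset.sum_add_distrib]
    exact Finset.sum_congr rfl fun i _ => by ring
  have hpy : 0 ≤ ∑ i, A i * (p i - y i) ^ 2 :=
    Finset.sum_nonneg fun i _ => mul_nonneg (hA i) (sq_nonneg _)
  linarith

lemma aux_homog {d : ℕ} (q : ℝ) (hq : 1 ≤ q) (x : Fin d → ℝ) (a : ℝ) (ha : 0 ≤ a) :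
    (∑ i : Fin d, |a * x i| ^ q) ^ (1 / q) = a * (∑ i : Fin d, |x i| ^ q) ^ (1 / q) := by
  have hq0 : q ≠ 0 := by linarith
  have h1 : ∀ i : Fin d, |a * x i| ^ q = a ^ q * |x i| ^ q := by
    intro i
    rw [abs_mul, abs_of_nonneg ha, Real.mul_rpow ha (abs_nonneg _)]
  simp only [h1, ← Finset.mul_sum]
  rw [Real.mul_rpow (Real.rpow_nonneg ha q)
    (Finset.sum_nonneg fun i _ => Real.rpow_nonneg (abs_nonneg _) q),
    ← Real.rpow_mul ha, mul_one_div_cancel hq0, Real.rpow_one]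

lemma aux_W_convex (d : ℕ) (q C : ℝ) (hq : 1 ≤ q) (S : Fin d → ℝ) :
    Convex ℝ {v : Fin d → ℝ | (∑ i : Fin d, |v i / Real.sqrt (S i)| ^ q) ^ (1 / q) ≤ C} := by
  intro v1 hv1 v2 hv2 a b ha hb hab
  simp only [Set.mem_setOf_eq] at *
  have heq : ∀ i : Fin d, (a • v1 + b • v2) i / Real.sqrt (S i)
      = a * (v1 i / Real.sqrt (S i)) + b * (v2 i / Real.sqrt (S i)) := by
    intro i
    simp only [Pi.add_apply, Pi.smul_apply, smul_eq_mul]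
    ring
  calc (∑ i : Fin d, |(a • v1 + b • v2) i / Real.sqrt (S i)| ^ q) ^ (1 / q)
      = (∑ i : Fin d, |a * (v1 i / Real.sqrt (S i)) + b * (v2 i / Real.sqrt (S i))| ^ q) ^ (1 / q) := by
        simp only [heq]
    _ ≤ (∑ i : Fin d, |a * (v1 i / Real.sqrt (S i))| ^ q) ^ (1 / q)
        + (∑ i : Fin d, |b * (v2 i / Real.sqrt (S i))| ^ q) ^ (1 / q) :=
        Real.Lp_add_le Finset.univ _ _ hq
    _ = a * (∑ i : Fin d, |v1 i / Real.sqrt (S i)| ^ q) ^ (1 / q)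
        + b * (∑ i : Fin d, |v2 i / Real.sqrt (S i)| ^ q) ^ (1 / q) := by
        rw [aux_homog q hq _ a ha, aux_homog q hq _ b hb]
    _ ≤ a * C + b * C :=
        add_le_add (mul_le_mul_of_nonneg_left hv1 ha) (mul_le_mul_of_nonneg_left hv2 hb)
    _ = C := by rw [← add_mul, hab, one_mul]

lemma aux_coord_bound {d : ℕ} (q C : ℝ) (hq : 1 ≤ q) (hC : 0 < C) (S : Fin d → ℝ)
    (hS : ∀ i, 0 < S i) (v : Fin d → ℝ)
    (hv : (∑ i : Fin d, |v i / Real.sqrt (S i)| ^ q) ^ (1 / q) ≤ C) (i : Fin d) :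
    |v i| ≤ C * Real.sqrt (S i) := by
  have hq0 : 0 < q := by linarith
  have hsum : 0 ≤ ∑ i : Fin d, |v i / Real.sqrt (S i)| ^ q :=
    Finset.sum_nonneg fun i _ => Real.rpow_nonneg (abs_nonneg _) _
  have h1 : (∑ i : Fin d, |v i / Real.sqrt (S i)| ^ q) ≤ C ^ q := by
    have := Real.rpow_le_rpow (Real.rpow_nonneg hsum _) hv hq0.le
    rwa [← Real.rpow_mul hsum, one_div_mul_cancel (ne_of_gt hq0), Real.rpow_one] at this
  have h2 : |v i / Real.sqrt (S i)| ^ q ≤ C ^ q :=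
    le_trans (Finset.single_le_sum (f := fun i => |v i / Real.sqrt (S i)| ^ q)
      (fun j _ => Real.rpow_nonneg (abs_nonneg _) _) (Finset.mem_univ i)) h1
  have h3 : |v i / Real.sqrt (S i)| ≤ C :=
    (Real.rpow_le_rpow_iff (abs_nonneg _) hC.le hq0).mp h2
  have hsq : 0 < Real.sqrt (S i) := Real.sqrt_pos.mpr (hS i)
  rw [abs_div, abs_of_nonneg hsq.le, div_le_iff₀ hsq] at h3
  linarith

/-- Theorem 1 of the paper (transductive case): projected gradient descent with
the diagonal conditioner `A_{t,ii} = (1/(C√2)) √((∑_{j≤t} g_{ji}²)/S_ii)`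
(coordinates with zero numerator are skipped), projecting in the `A_t`-norm
onto `W = {w : ‖S^{-1/2} w‖_q ≤ C}`, satisfies the regret bound
`∑_t (ℓ_t(w_t) − ℓ_t(w*)) ≤ 2√2 C ∑_i √(S_ii ∑_{j≤T} g_{ji}²)`. -/
theorem stmt_11 (d T : ℕ) (C : ℝ) (hC : 0 < C) (q : ℝ) (hq : 1 ≤ q)
    (S : Fin d → ℝ) (hS : ∀ i, 0 < S i)
    (w g : ℕ → (Fin d → ℝ)) (ℓ : ℕ → (Fin d → ℝ) → ℝ) (wstar : Fin d → ℝ)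
    -- the diagonal conditioner entries
    (A : ℕ → Fin d → ℝ)
    (hA : ∀ t, ∀ i, A t i =
      (1 / (C * Real.sqrt 2)) * Real.sqrt ((∑ j ∈ Finset.Icc 1 t, g j i ^ 2) / S i))
    -- the comparator set W = {w : ‖S^{-1/2} w‖_q ≤ C}
    (W : Set (Fin d → ℝ))
    (hW : W = {v : Fin d → ℝ | (∑ i : Fin d, |v i / Real.sqrt (S i)| ^ q) ^ (1 / q) ≤ C})
    (hwstar : wstar ∈ W)
    (hw1 : w 1 = 0)
    -- projected update: w_{t+1} is the A_t-norm projection onto W of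
    -- w_t − A_t⁻¹ g_t (coordinates with zero conditioner entry are skipped)
    (hproj : ∀ t ∈ Finset.Icc 1 T,
      w (t + 1) ∈ W ∧
      ∀ u ∈ W,
        ∑ i : Fin d, A t i *
            (w (t + 1) i - (w t i - if A t i ≠ 0 then g t i / A t i else 0)) ^ 2 ≤
          ∑ i : Fin d, A t i *
            (u i - (w t i - if A t i ≠ 0 then g t i / A t i else 0)) ^ 2)
    -- convexity and subgradients
    (hconv : ∀ t ∈ Finset.Icc 1 T, ConvexOn ℝ Set.univ (ℓ t))
    (hsubgrad : ∀ t ∈ Finset.Icc 1 T, ∀ v : Fin d → ℝ,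
      ℓ t (w t) + g t ⬝ᵥ (v - w t) ≤ ℓ t v) :
    ∑ t ∈ Finset.Icc 1 T, (ℓ t (w t) - ℓ t wstar) ≤
      2 * Real.sqrt 2 * C *
        ∑ i : Fin d, Real.sqrt (S i * ∑ j ∈ Finset.Icc 1 T, g j i ^ 2) := by
  have hs2 : (0:ℝ) < Real.sqrt 2 := Real.sqrt_pos.mpr (by norm_num)
  have h22 : Real.sqrt 2 * Real.sqrt 2 = 2 := Real.mul_self_sqrt (by norm_num)
  have hq0 : (0:ℝ) < q := by linarith
  have hAnn : ∀ t i, 0 ≤ A t i := by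
    intro t i
    rw [hA]
    positivity
  have hA0 : ∀ i, A 0 i = 0 := by
    intro i
    rw [hA]
    simp
  have hGnn : ∀ t i, (0:ℝ) ≤ ∑ j ∈ Finset.Icc 1 t, g j i ^ 2 :=
    fun t i => Finset.sum_nonneg fun j _ => sq_nonneg _
  have hAmono : ∀ t i, A t i ≤ A (t + 1) i := by
    intro t i
    rw [hA, hA]
    have hGle : (∑ j ∈ Finset.Icc 1 t, g j i ^ 2) ≤ ∑ j ∈ Finset.Icc 1 (t + 1), g j i ^ 2 := by
      rw [Finset.sum_Icc_succ_top (by omega)]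
      nlinarith [sq_nonneg (g (t + 1) i)]
    exact mul_le_mul_of_nonneg_left
      (Real.sqrt_le_sqrt ((div_le_div_iff_of_pos_right (hS i)).mpr hGle)) (by positivity)
  have hAzero : ∀ t i, 1 ≤ t → A t i = 0 → g t i = 0 := by
    intro t i ht hz
    rw [hA] at hz
    have hc : (0:ℝ) < 1 / (C * Real.sqrt 2) := by positivity
    have h1 : Real.sqrt ((∑ j ∈ Finset.Icc 1 t, g j i ^ 2) / S i) = 0 := by
      rcases mul_eq_zero.mp hz with h | h
      · exact absurd h (ne_of_gt hc)
      · exact h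
    have h2 : (∑ j ∈ Finset.Icc 1 t, g j i ^ 2) / S i ≤ 0 := Real.sqrt_eq_zero'.mp h1
    have h3 : (∑ j ∈ Finset.Icc 1 t, g j i ^ 2) ≤ 0 := by
      rcases lt_or_ge 0 (∑ j ∈ Finset.Icc 1 t, g j i ^ 2) with hpos | hle
      · exact absurd (div_pos hpos (hS i)) (not_lt.mpr h2)
      · exact hle
    have h4 : g t i ^ 2 ≤ 0 :=
      le_trans (Finset.single_le_sum (fun j _ => sq_nonneg (g j i))
        (Finset.mem_Icc.mpr ⟨ht, le_rfl⟩)) h3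
    nlinarith [sq_nonneg (g t i)]
  have hWconv : Convex ℝ W := hW ▸ aux_W_convex d q C hq S
  have hcoord : ∀ v ∈ W, ∀ i, |v i| ≤ C * Real.sqrt (S i) := by
    intro v hv i
    rw [hW] at hv
    exact aux_coord_bound q C hq hC S hS v hv i
  have h0W : (0 : Fin d → ℝ) ∈ W := by
    rw [hW]
    have hz : ∀ i : Fin d, |(0:ℝ) / Real.sqrt (S i)| ^ q = 0 := fun i => by
      rw [zero_div, abs_zero, Real.zero_rpow (ne_of_gt hq0)]
    simp only [Set.mem_setOf_eq, Pi.zero_apply, hz, Finset.sum_const_zero]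
    rw [Real.zero_rpow (by positivity : (1:ℝ)/q ≠ 0)]
    exact hC.le
  have hmem : ∀ t ∈ Finset.Icc 1 T, w t ∈ W := by
    intro t ht
    rcases Finset.mem_Icc.mp ht with ⟨h1, h2⟩
    rcases Nat.exists_eq_add_of_le h1 with ⟨s, rfl⟩
    cases s with
    | zero => simpa [hw1] using h0W
    | succ s =>
      have hs : (s + 1) ∈ Finset.Icc 1 T := Finset.mem_Icc.mpr ⟨by omega, by omega⟩
      have heq : 1 + (s + 1) = (s + 1) + 1 := by omega
      rw [heq]
      exact (hproj _ hs).1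
  -- per-step inequality
  have hstep : ∀ t ∈ Finset.Icc 1 T,
      2 * (∑ i : Fin d, g t i * (w t i - wstar i)) ≤
        (∑ i : Fin d, A t i * ((w t i - wstar i) ^ 2 - (w (t + 1) i - wstar i) ^ 2))
          + ∑ i : Fin d, (if A t i ≠ 0 then g t i ^ 2 / A t i else 0) := by
    intro t ht
    have ht1 : 1 ≤ t := (Finset.mem_Icc.mp ht).1
    have hcontr := aux_proj_contract (A t)
      (fun i => w t i - if A t i ≠ 0 then g t i / A t i else 0) (w (t + 1)) wstar
      (hAnn t) W hWconv (hproj t ht).1 hwstar (hproj t ht).2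
    have hexp : ∑ i : Fin d,
        A t i * (wstar i - (w t i - if A t i ≠ 0 then g t i / A t i else 0)) ^ 2
        = (∑ i : Fin d, A t i * (w t i - wstar i) ^ 2)
          - 2 * (∑ i : Fin d, g t i * (w t i - wstar i))
          + ∑ i : Fin d, (if A t i ≠ 0 then g t i ^ 2 / A t i else 0) := by
      rw [Finset.mul_sum, ← Finset.sum_sub_distrib, ← Finset.sum_add_distrib]
      refine Finset.sum_congr rfl fun i _ => ?_
      by_cases hz : A t i = 0
      · have hg0 : g t i = 0 := hAzero t i ht1 hz
        simp [hz, hg0]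
      · rw [if_pos hz, if_pos hz]
        field_simp
        ring
    have hsq1 : ∑ i : Fin d, A t i * (wstar i - w (t + 1) i) ^ 2
        = ∑ i : Fin d, A t i * (w (t + 1) i - wstar i) ^ 2 :=
      Finset.sum_congr rfl fun i _ => by ring
    have hsplit : ∑ i : Fin d, A t i * ((w t i - wstar i) ^ 2 - (w (t + 1) i - wstar i) ^ 2)
        = (∑ i : Fin d, A t i * (w t i - wstar i) ^ 2)
          - ∑ i : Fin d, A t i * (w (t + 1) i - wstar i) ^ 2 := by
      rw [← Finset.sum_sub_distrib]
      exact Finset.sum_congr rfl fun i _ => by ring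
    rw [hsq1, hexp] at hcontr
    rw [hsplit]
    linarith
  -- regret step
  have hreg : ∀ t ∈ Finset.Icc 1 T,
      ℓ t (w t) - ℓ t wstar ≤ ∑ i : Fin d, g t i * (w t i - wstar i) := by
    intro t ht
    have h1 := hsubgrad t ht wstar
    have h2 : g t ⬝ᵥ (wstar - w t) = ∑ i : Fin d, g t i * (wstar i - w t i) := by
      simp [dotProduct, mul_sub, Finset.sum_sub_distrib]
    have h3 : ∑ i : Fin d, g t i * (wstar i - w t i)
        = -∑ i : Fin d, g t i * (w t i - wstar i) := by
      rw [← Finset.sum_neg_distrib]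
      exact Finset.sum_congr rfl fun i _ => by ring
    rw [h2, h3] at h1
    linarith
  -- per-coordinate bounds for the two summed terms
  have hT1 : ∀ i : Fin d,
      ∑ t ∈ Finset.Icc 1 T, A t i * ((w t i - wstar i) ^ 2 - (w (t + 1) i - wstar i) ^ 2)
        ≤ 2 * Real.sqrt 2 * C * Real.sqrt (S i * ∑ j ∈ Finset.Icc 1 T, g j i ^ 2) := by
    intro i
    have hBD : ∀ t ∈ Finset.Icc 1 T, (w t i - wstar i) ^ 2 ≤ 4 * C ^ 2 * S i := by
      intro t ht
      have h1 := hcoord (w t) (hmem t ht) i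
      have h2 := hcoord wstar hwstar i
      have h3 : |w t i - wstar i| ≤ 2 * C * Real.sqrt (S i) :=
        le_trans (abs_sub _ _) (by linarith)
      have h4 : (w t i - wstar i) ^ 2 ≤ (2 * C * Real.sqrt (S i)) ^ 2 := by
        rw [← sq_abs]
        exact pow_le_pow_left₀ (abs_nonneg _) h3 2
      have h5 : Real.sqrt (S i) ^ 2 = S i := Real.sq_sqrt (hS i).le
      nlinarith
    have htel := aux_tele (fun t => A t i) (fun t => (w t i - wstar i) ^ 2) (4 * C ^ 2 * S i)
      (hA0 i) (fun t => hAmono t i) (fun t => hAnn t i) (fun t => sq_nonneg _) T hBD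
    refine le_trans htel (le_of_eq ?_)
    show A T i * (4 * C ^ 2 * S i) = _
    rw [hA, Real.sqrt_div (hGnn T i), Real.sqrt_mul (hS i).le]
    set s := Real.sqrt (S i) with hsdef
    have hspos : 0 < s := Real.sqrt_pos.mpr (hS i)
    have hs2' : s ^ 2 = S i := Real.sq_sqrt (hS i).le
    rw [← hs2']
    field_simp
    ring_nf
    rw [Real.sq_sqrt (by norm_num : (0:ℝ) ≤ 2)]
    ring
  have hT2 : ∀ i : Fin d,
      ∑ t ∈ Finset.Icc 1 T, (if A t i ≠ 0 then g t i ^ 2 / A t i else 0)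
        ≤ 2 * Real.sqrt 2 * C * Real.sqrt (S i * ∑ j ∈ Finset.Icc 1 T, g j i ^ 2) := by
    intro i
    have hpt : ∀ t ∈ Finset.Icc 1 T, (if A t i ≠ 0 then g t i ^ 2 / A t i else 0)
        ≤ C * Real.sqrt 2 * Real.sqrt (S i) *
          (g t i ^ 2 / Real.sqrt (∑ j ∈ Finset.Icc 1 t, g j i ^ 2)) := by
      intro t ht
      by_cases hz : A t i = 0
      · rw [if_neg (by simpa using hz)]
        positivity
      · rw [if_pos hz]
        have hGpos : 0 < ∑ j ∈ Finset.Icc 1 t, g j i ^ 2 := by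
          rcases (hGnn t i).lt_or_eq with h | h
          · exact h
          · exfalso
            apply hz
            rw [hA, ← h]
            simp
        have hsG : 0 < Real.sqrt (∑ j ∈ Finset.Icc 1 t, g j i ^ 2) := Real.sqrt_pos.mpr hGpos
        have hssi : (0:ℝ) < Real.sqrt (S i) := Real.sqrt_pos.mpr (hS i)
        apply le_of_eq
        rw [hA, Real.sqrt_div (hGnn t i)]
        field_simp
    have hsum := Finset.sum_le_sum hpt
    have hkey := aux_sum_div_sqrt (fun j => g j i ^ 2) (fun j => sq_nonneg _) T
    calc ∑ t ∈ Finset.Icc 1 T, (if A t i ≠ 0 then g t i ^ 2 / A t i else 0)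
        ≤ ∑ t ∈ Finset.Icc 1 T, C * Real.sqrt 2 * Real.sqrt (S i) *
            (g t i ^ 2 / Real.sqrt (∑ j ∈ Finset.Icc 1 t, g j i ^ 2)) := hsum
      _ = C * Real.sqrt 2 * Real.sqrt (S i) *
            ∑ t ∈ Finset.Icc 1 T, g t i ^ 2 / Real.sqrt (∑ j ∈ Finset.Icc 1 t, g j i ^ 2) := by
          rw [Finset.mul_sum]
      _ ≤ C * Real.sqrt 2 * Real.sqrt (S i) *
            (2 * Real.sqrt (∑ j ∈ Finset.Icc 1 T, g j i ^ 2)) := by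
          apply mul_le_mul_of_nonneg_left hkey
          positivity
      _ = 2 * Real.sqrt 2 * C * Real.sqrt (S i * ∑ j ∈ Finset.Icc 1 T, g j i ^ 2) := by
          rw [Real.sqrt_mul (hS i).le]
          ring
  -- combine everything
  have hfinal : ∑ t ∈ Finset.Icc 1 T, (ℓ t (w t) - ℓ t wstar)
      ≤ ∑ t ∈ Finset.Icc 1 T, ∑ i : Fin d, g t i * (w t i - wstar i) :=
    Finset.sum_le_sum hreg
  have hmain : 2 * ∑ t ∈ Finset.Icc 1 T, ∑ i : Fin d, g t i * (w t i - wstar i)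
      ≤ 2 * (2 * Real.sqrt 2 * C *
          ∑ i : Fin d, Real.sqrt (S i * ∑ j ∈ Finset.Icc 1 T, g j i ^ 2)) := by
    calc 2 * ∑ t ∈ Finset.Icc 1 T, ∑ i : Fin d, g t i * (w t i - wstar i)
        = ∑ t ∈ Finset.Icc 1 T, 2 * ∑ i : Fin d, g t i * (w t i - wstar i) := by
          rw [Finset.mul_sum]
      _ ≤ ∑ t ∈ Finset.Icc 1 T,
            ((∑ i : Fin d, A t i * ((w t i - wstar i) ^ 2 - (w (t + 1) i - wstar i) ^ 2))
              + ∑ i : Fin d, (if A t i ≠ 0 then g t i ^ 2 / A t i else 0)) :=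
          Finset.sum_le_sum hstep
      _ = (∑ t ∈ Finset.Icc 1 T, ∑ i : Fin d,
              A t i * ((w t i - wstar i) ^ 2 - (w (t + 1) i - wstar i) ^ 2))
          + ∑ t ∈ Finset.Icc 1 T, ∑ i : Fin d,
              (if A t i ≠ 0 then g t i ^ 2 / A t i else 0) := Finset.sum_add_distrib
      _ = (∑ i : Fin d, ∑ t ∈ Finset.Icc 1 T,
              A t i * ((w t i - wstar i) ^ 2 - (w (t + 1) i - wstar i) ^ 2))
          + ∑ i : Fin d, ∑ t ∈ Finset.Icc 1 T,
              (if A t i ≠ 0 then g t i ^ 2 / A t i else 0) := by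
          rw [Finset.sum_comm, Finset.sum_comm (s := Finset.Icc 1 T)]
      _ ≤ (∑ i : Fin d, 2 * Real.sqrt 2 * C *
              Real.sqrt (S i * ∑ j ∈ Finset.Icc 1 T, g j i ^ 2))
          + ∑ i : Fin d, 2 * Real.sqrt 2 * C *
              Real.sqrt (S i * ∑ j ∈ Finset.Icc 1 T, g j i ^ 2) :=
          add_le_add (Finset.sum_le_sum fun i _ => hT1 i) (Finset.sum_le_sum fun i _ => hT2 i)
      _ = 2 * (2 * Real.sqrt 2 * C *
            ∑ i : Fin d, Real.sqrt (S i * ∑ j ∈ Finset.Icc 1 T, g j i ^ 2)) := by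
          rw [← Finset.mul_sum]
          ring
  linarith
end

section
/- Quantile observation lemma: let x_1, ..., x_T be an exchangeable sequence of random vectors in ℝᵈ, δ, p ∈ (0,1), and n = ⌈log(d/δ)/p⌉. Then with probability at least 1 − δ, for every feature i ∈ {1,...,d}, max_{t ≤ n} |x_{ti}| ≥ Quantile({|x_{ti}|}_{t=1}^T, 1−p), where Quantile(·, 1−p) denotes the ⌈Tp⌉-th largest value. -/
open MeasureTheory Finset
open scoped ENNReal NNReal

/-- The `k`-th largest value of a finite sequence `v : Fin T → ℝ`
(for `1 ≤ k ≤ T`): the supremum of all thresholds exceeded (weakly) by at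
least `k` of the values. -/
noncomputable def kthLargest (T : ℕ) (v : Fin T → ℝ) (k : ℕ) : ℝ :=
  sSup {r : ℝ | k ≤ ((Finset.univ : Finset (Fin T)).filter fun t => r ≤ v t).card}

/-- The maximum of `|v_t|` over the first `n` indices of `Fin T`
(as a real number; `0` if `n = 0`). -/
noncomputable def maxFirst (T : ℕ) (v : Fin T → ℝ) (n : ℕ) : ℝ :=
  ((((Finset.univ : Finset (Fin T)).filter fun t : Fin T => (t : ℕ) < n).sup
      fun t => (⟨|v t|, abs_nonneg _⟩ : NNReal)) : NNReal)

section kth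

variable {T k : ℕ} (v : Fin T → ℝ)

lemma kth_exists (hk1 : 1 ≤ k) (hkT : k ≤ T) :
    ∃ b, kthLargest T v k = b ∧
      k ≤ ((Finset.univ : Finset (Fin T)).filter fun t => b ≤ v t).card := by
  have hT : 0 < T := hk1.trans hkT
  haveI : Nonempty (Fin T) := ⟨⟨0, hT⟩⟩
  have himg : ((Finset.univ : Finset (Fin T)).image v).Nonempty :=
    (Finset.image_nonempty).2 Finset.univ_nonempty
  set N : ℝ → ℕ := fun r => ((Finset.univ : Finset (Fin T)).filter fun t => r ≤ v t).card with hN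
  set B' : Finset ℝ := ((Finset.univ : Finset (Fin T)).image v).filter fun r => k ≤ N r with hB'
  have hB'ne : B'.Nonempty := by
    refine ⟨((Finset.univ : Finset (Fin T)).image v).min' himg, ?_⟩
    rw [hB', Finset.mem_filter]
    refine ⟨Finset.min'_mem _ _, ?_⟩
    have : ((Finset.univ : Finset (Fin T)).filter fun t =>
        ((Finset.univ : Finset (Fin T)).image v).min' himg ≤ v t) = Finset.univ := by
      refine Finset.filter_true_of_mem fun t _ => ?_
      exact Finset.min'_le _ _ (Finset.mem_image_of_mem v (Finset.mem_univ t))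
    simp only [hN, this, Finset.card_univ, Fintype.card_fin]
    exact hkT
  set b : ℝ := B'.max' hB'ne with hb
  have hbmem : b ∈ B' := Finset.max'_mem _ _
  have hbN : k ≤ N b := (Finset.mem_filter.1 hbmem).2
  have hub : ∀ r, k ≤ N r → r ≤ b := by
    intro r hr
    have hfne : ((Finset.univ : Finset (Fin T)).filter fun t => r ≤ v t).Nonempty := by
      rw [← Finset.card_pos]; exact lt_of_lt_of_le hk1 hr
    have hCne : (((Finset.univ : Finset (Fin T)).filter fun t => r ≤ v t).image v).Nonempty :=
      (Finset.image_nonempty).2 hfne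
    set b' : ℝ := (((Finset.univ : Finset (Fin T)).filter fun t => r ≤ v t).image v).min' hCne
      with hb'
    have hrb' : r ≤ b' := by
      obtain ⟨t0, ht0, hvt0⟩ := Finset.mem_image.1 (Finset.min'_mem _ hCne)
      rw [hb', ← hvt0]
      exact (Finset.mem_filter.1 ht0).2
    have hb'N : k ≤ N b' := by
      refine hr.trans (Finset.card_le_card ?_)
      intro t ht
      rw [Finset.mem_filter]
      exact ⟨Finset.mem_univ _, Finset.min'_le _ _ (Finset.mem_image_of_mem v ht)⟩
    have hb'B' : b' ∈ B' := by
      rw [hB', Finset.mem_filter]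
      constructor
      · obtain ⟨t0, _, hvt0⟩ := Finset.mem_image.1 (Finset.min'_mem _ hCne)
        rw [hb', ← hvt0]
        exact Finset.mem_image_of_mem v (Finset.mem_univ t0)
      · exact hb'N
    exact hrb'.trans (Finset.le_max' _ _ hb'B')
  refine ⟨b, ?_, hbN⟩
  have : kthLargest T v k = b := by
    apply le_antisymm
    · exact csSup_le ⟨b, hbN⟩ hub
    · exact le_csSup ⟨b, hub⟩ hbN
  exact this

lemma lt_kth_iff (hk1 : 1 ≤ k) (hkT : k ≤ T) (c : ℝ) :
    c < kthLargest T v k ↔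
      ∃ s : Finset (Fin T), s.card = k ∧ ∀ t ∈ s, c < v t := by
  obtain ⟨b, hbe, hbN⟩ := kth_exists v hk1 hkT
  constructor
  · intro hc
    obtain ⟨s, hs, hscard⟩ := Finset.exists_subset_card_eq hbN
    refine ⟨s, hscard, fun t ht => ?_⟩
    have := (Finset.mem_filter.1 (hs ht)).2
    calc c < kthLargest T v k := hc
    _ = b := hbe
    _ ≤ v t := this
  · rintro ⟨s, hscard, hslt⟩
    have hsne : s.Nonempty := by rw [← Finset.card_pos, hscard]; exact hk1
    have hCne : (s.image v).Nonempty := (Finset.image_nonempty).2 hsne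
    set m := (s.image v).min' hCne with hm
    have hcm : c < m := by
      obtain ⟨t0, ht0, hvt0⟩ := Finset.mem_image.1 (Finset.min'_mem _ hCne)
      rw [hm, ← hvt0]; exact hslt t0 ht0
    have hmN : k ≤ ((Finset.univ : Finset (Fin T)).filter fun t => m ≤ v t).card := by
      rw [← hscard]
      refine Finset.card_le_card fun t ht => ?_
      rw [Finset.mem_filter]
      exact ⟨Finset.mem_univ _, Finset.min'_le _ _ (Finset.mem_image_of_mem v ht)⟩
    have hT : 0 < T := hk1.trans hkT
    haveI : Nonempty (Fin T) := ⟨⟨0, hT⟩⟩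
    have himg : ((Finset.univ : Finset (Fin T)).image v).Nonempty :=
      (Finset.image_nonempty).2 Finset.univ_nonempty
    have hbdd : BddAbove {r : ℝ |
        k ≤ ((Finset.univ : Finset (Fin T)).filter fun t => r ≤ v t).card} := by
      refine ⟨((Finset.univ : Finset (Fin T)).image v).max' himg, fun r hr => ?_⟩
      have hfne : ((Finset.univ : Finset (Fin T)).filter fun t => r ≤ v t).Nonempty := by
        rw [← Finset.card_pos]; exact lt_of_lt_of_le hk1 hr
      obtain ⟨t, ht⟩ := hfne
      exact (Finset.mem_filter.1 ht).2.trans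
        (Finset.le_max' _ _ (Finset.mem_image_of_mem v (Finset.mem_univ t)))
    have : m ≤ kthLargest T v k := le_csSup hbdd hmN
    linarith
end kth

lemma kth_perm (σ : Equiv.Perm (Fin T)) :
    kthLargest T (fun t => v (σ t)) k = kthLargest T v k := by
  have hcard : ∀ r : ℝ, ((Finset.univ : Finset (Fin T)).filter fun t => r ≤ v (σ t)).card
      = ((Finset.univ : Finset (Fin T)).filter fun t => r ≤ v t).card := by
    intro r
    apply Finset.card_bij (fun t _ => σ t)
    · intro a ha
      simp only [Finset.mem_filter] at *
      exact ⟨Finset.mem_univ _, ha.2⟩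
    · intro a _ b _ hab
      exact σ.injective hab
    · intro b hb
      refine ⟨σ.symm b, ?_, by simp⟩
      simp only [Finset.mem_filter] at *
      simpa using hb.2
  unfold kthLargest
  congr 1
  ext r
  simp only [Set.mem_setOf_eq, hcard r]

lemma meas_kth {d : ℕ} (hk1 : 1 ≤ k) (hkT : k ≤ T) (i : Fin d) :
    Measurable fun w : Fin T → Fin d → ℝ => kthLargest T (fun t => |w t i|) k := by
  apply measurable_of_Ioi
  intro c
  have hco : ∀ t : Fin T, Measurable fun w : Fin T → Fin d → ℝ => |w t i| :=
    fun t => ((measurable_pi_apply i).comp (measurable_pi_apply t)).abs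
  have : (fun w : Fin T → Fin d → ℝ => kthLargest T (fun t => |w t i|) k) ⁻¹' Set.Ioi c
      = ⋃ s : Finset (Fin T), ⋃ (_ : s.card = k),
          ⋂ t ∈ s, {w : Fin T → Fin d → ℝ | c < |w t i|} := by
    ext w
    simp only [Set.mem_preimage, Set.mem_Ioi, Set.mem_iUnion, Set.mem_iInter, Set.mem_setOf_eq]
    rw [lt_kth_iff _ hk1 hkT]
    constructor
    · rintro ⟨s, h1, h2⟩; exact ⟨s, h1, h2⟩
    · rintro ⟨s, h1, h2⟩; exact ⟨s, h1, h2⟩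
  rw [this]
  refine MeasurableSet.iUnion fun s => MeasurableSet.iUnion fun _ => ?_
  exact MeasurableSet.biInter s.countable_toSet fun t _ =>
    measurableSet_lt measurable_const (hco t)

lemma meas_nnsup {α : Type*} [MeasurableSpace α] {ι : Type*} (F : Finset ι)
    (g : ι → α → NNReal) (hg : ∀ t, Measurable (g t)) :
    Measurable fun a => (F.sup fun t => g t a : NNReal) := by
  classical
  induction F using Finset.induction_on with
  | empty => simpa using measurable_const
  | insert _ _ h ih =>
      simp only [Finset.sup_insert]
      exact (hg _).sup ih

lemma meas_maxFirst {d : ℕ} (n : ℕ) (i : Fin d) :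
    Measurable fun w : Fin T → Fin d → ℝ => maxFirst T (fun t => w t i) n := by
  unfold maxFirst
  refine measurable_coe_nnreal_real.comp (meas_nnsup _
    (fun t (w : Fin T → Fin d → ℝ) => (⟨|w t i|, abs_nonneg _⟩ : NNReal)) fun t => ?_)
  have hc : Measurable fun w : Fin T → Fin d → ℝ => |w t i| :=
    ((measurable_pi_apply i).comp (measurable_pi_apply t)).abs
  exact hc.subtype_mk

lemma count_perm_avoid {T n k : ℕ} (hnT : n ≤ T) (S : Finset (Fin T)) (hS : k ≤ S.card) :
    ((Finset.univ : Finset (Equiv.Perm (Fin T))).filter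
        fun σ => ∀ t : Fin T, (t : ℕ) < n → σ t ∉ S).card
      ≤ Nat.factorial (T - n) * (T - k).descFactorial n := by
  classical
  set s := (Finset.univ : Finset (Equiv.Perm (Fin T))).filter
      fun σ => ∀ t : Fin T, (t : ℕ) < n → σ t ∉ S with hs
  have hcardFn : Fintype.card {t : Fin T // (t : ℕ) < n} = n := by
    have e : {t : Fin T // (t : ℕ) < n} ≃ Fin n :=
      ⟨fun x => ⟨x.1, x.2⟩, fun j => ⟨⟨j.1, lt_of_lt_of_le j.2 hnT⟩, j.2⟩,
        fun x => by apply Subtype.ext; apply Fin.ext; rfl,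
        fun j => by apply Fin.ext; rfl⟩
    exact (Fintype.card_congr e).trans (Fintype.card_fin n)
  set f : Equiv.Perm (Fin T) → ({t : Fin T // (t : ℕ) < n} → Fin T) :=
    fun σ t => σ t.1 with hf
  have hfiber : ∀ g ∈ s.image f, (s.filter fun σ => f σ = g).card ≤ Nat.factorial (T - n) := by
    intro g hg
    rcases (s.filter fun σ => f σ = g).eq_empty_or_nonempty with he | ⟨σ₀, hσ₀⟩
    · simp [he]
    · have hσ₀g : f σ₀ = g := (Finset.mem_filter.1 hσ₀).2
      set H := (Finset.univ : Finset (Equiv.Perm (Fin T))).filter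
          fun τ => ∀ t : Fin T, (t : ℕ) < n → τ t = t with hH
      have h1 : (s.filter fun σ => f σ = g).card ≤ H.card := by
        apply Finset.card_le_card_of_injOn (fun σ => σ₀⁻¹ * σ)
        · intro σ hσ
          have hσg : f σ = g := (Finset.mem_filter.1 hσ).2
          rw [hH, Finset.mem_coe, Finset.mem_filter]
          refine ⟨Finset.mem_univ _, fun t ht => ?_⟩
          have : σ t = σ₀ t := by
            have e1 : σ t = g ⟨t, ht⟩ := by rw [← hσg]
            have e2 : σ₀ t = g ⟨t, ht⟩ := by rw [← hσ₀g]
            rw [e1, e2]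
          simp [Equiv.Perm.mul_apply, this]
        · intro a _ b _ hab
          exact mul_left_cancel hab
      have h2 : H.card ≤ Nat.factorial (T - n) := by
        have hcoe : H.card = Fintype.card {τ // τ ∈ H} := (Fintype.card_coe H).symm
        have hsub : ∀ τ ∈ H, ∀ x : Fin T, ¬ (x : ℕ) < n ↔ ¬ ((τ x : Fin T) : ℕ) < n := by
          intro τ hτ x
          have hfix : ∀ t : Fin T, (t : ℕ) < n → τ t = t := (Finset.mem_filter.1 hτ).2
          constructor
          · intro hx hτx
            have h2 : τ x = x := τ.injective (hfix (τ x) hτx)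
            rw [h2] at hτx
            exact hx hτx
          · intro hτx hx
            exact hτx (by rw [hfix x hx]; exact hx)
        have φinj : Function.Injective (fun τp : {τ // τ ∈ H} =>
            Equiv.Perm.subtypePerm (p := fun x : Fin T => ¬ (x : ℕ) < n) τp.1 (fun x => (hsub τp.1 τp.2 x).symm)) := by
          rintro ⟨τ1, h1⟩ ⟨τ2, h2⟩ heq
          apply Subtype.ext
          apply Equiv.ext
          intro x
          by_cases hx : (x : ℕ) < n
          · rw [(Finset.mem_filter.1 h1).2 x hx, (Finset.mem_filter.1 h2).2 x hx]
          · have := congrArg (fun e => (e ⟨x, hx⟩ : {x : Fin T // ¬ (x : ℕ) < n})) heq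
            exact congrArg Subtype.val this
        calc H.card = Fintype.card {τ // τ ∈ H} := hcoe
          _ ≤ Fintype.card (Equiv.Perm {x : Fin T // ¬ (x : ℕ) < n}) :=
              Fintype.card_le_of_injective _ φinj
          _ = Nat.factorial (Fintype.card {x : Fin T // ¬ (x : ℕ) < n}) := Fintype.card_perm
          _ = Nat.factorial (T - n) := by
              rw [Fintype.card_subtype_compl, hcardFn, Fintype.card_fin]
      exact h1.trans h2
  have himage : (s.image f).card ≤ (T - k).descFactorial n := by
    have hprop : ∀ g ∈ s.image f, Function.Injective g ∧ ∀ t, g t ∉ S := by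
      intro g hg
      obtain ⟨σ, hσ, rfl⟩ := Finset.mem_image.1 hg
      have hσP : ∀ t : Fin T, (t : ℕ) < n → σ t ∉ S := (Finset.mem_filter.1 hσ).2
      refine ⟨fun a b hab => Subtype.ext (σ.injective hab), fun t => hσP t.1 t.2⟩
    have hinj2 : Function.Injective (fun gp : {g // g ∈ s.image f} =>
        (⟨fun t => (⟨gp.1 t, (hprop gp.1 gp.2).2 t⟩ : {x : Fin T // x ∉ S}),
          fun a b hab => (hprop gp.1 gp.2).1 (congrArg Subtype.val hab)⟩ :
            {t : Fin T // (t : ℕ) < n} ↪ {x : Fin T // x ∉ S})) := by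
      rintro ⟨g1, h1⟩ ⟨g2, h2⟩ heq
      apply Subtype.ext
      funext t
      have := congrArg (fun e => ((e : _ ↪ _) t : {x : Fin T // x ∉ S})) heq
      exact congrArg Subtype.val this
    calc (s.image f).card = Fintype.card {g // g ∈ s.image f} := (Fintype.card_coe _).symm
      _ ≤ Fintype.card ({t : Fin T // (t : ℕ) < n} ↪ {x : Fin T // x ∉ S}) :=
          Fintype.card_le_of_injective _ hinj2
      _ = (Fintype.card {x : Fin T // x ∉ S}).descFactorial n := by
          rw [Fintype.card_embedding_eq, hcardFn]
      _ = (T - S.card).descFactorial n := by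
          rw [Fintype.card_subtype_compl, Fintype.card_coe, Fintype.card_fin]
      _ ≤ (T - k).descFactorial n :=
          Nat.descFactorial_le _ (Nat.sub_le_sub_left hS T)
  calc s.card ≤ Nat.factorial (T - n) * (s.image f).card := Finset.card_le_mul_card_image s _ hfiber
    _ ≤ Nat.factorial (T - n) * (T - k).descFactorial n := Nat.mul_le_mul_left _ himage

lemma dF_mul_pow_le (T k : ℕ) : ∀ n : ℕ,
    (T - k).descFactorial n * T ^ n ≤ (T - k) ^ n * T.descFactorial n
  | 0 => by simp
  | (n+1) => by
    have key : (T - k - n) * T ≤ (T - k) * (T - n) := by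
      have h1 : (T - k - n) * T = (T - k) * T - n * T := by rw [Nat.sub_mul]
      have h2 : (T - k) * (T - n) = (T - k) * T - (T - k) * n := by rw [Nat.mul_sub]
      rw [h1, h2]
      exact Nat.sub_le_sub_left (by calc (T - k) * n ≤ T * n := Nat.mul_le_mul_right _ (Nat.sub_le _ _)
        _ = n * T := Nat.mul_comm _ _) _
    have ih := dF_mul_pow_le T k n
    calc (T - k).descFactorial (n+1) * T ^ (n+1)
        = ((T - k - n) * T) * ((T - k).descFactorial n * T ^ n) := by
          rw [Nat.descFactorial_succ, pow_succ]; ring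
      _ ≤ ((T - k) * (T - n)) * ((T - k) ^ n * T.descFactorial n) := Nat.mul_le_mul key ih
      _ = (T - k) ^ (n+1) * T.descFactorial (n+1) := by
          rw [Nat.descFactorial_succ, pow_succ]; ring

lemma count_ratio_le (T k n : ℕ) (hT : 0 < T) (hnT : n ≤ T) (hkT : k ≤ T) (p : ℝ)
    (hp1 : p ≤ 1) (hpk : (T : ℝ) * p ≤ k) :
    ((Nat.factorial (T - n) * (T - k).descFactorial n : ℕ) : ℝ)
      ≤ (1 - p) ^ n * (Nat.factorial T : ℝ) := by
  have hnat := dF_mul_pow_le T k n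
  have hTn : (0:ℝ) < (T:ℝ) ^ n := by positivity
  have hbase : ((T - k : ℕ) : ℝ) ≤ (1 - p) * T := by
    rw [Nat.cast_sub hkT]; nlinarith
  have h1 : ((T - k : ℕ) : ℝ) ^ n ≤ ((1 - p) * T) ^ n :=
    pow_le_pow_left₀ (by positivity) hbase n
  have h2 : ((T - k).descFactorial n : ℝ) * (T:ℝ) ^ n
      ≤ ((T - k : ℕ) : ℝ) ^ n * (T.descFactorial n : ℝ) := by exact_mod_cast hnat
  have h3 : ((T - k).descFactorial n : ℝ) * (T:ℝ) ^ n
      ≤ ((1 - p) ^ n * (T.descFactorial n : ℝ)) * (T:ℝ) ^ n := by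
    calc ((T - k).descFactorial n : ℝ) * (T:ℝ) ^ n
        ≤ ((T - k : ℕ) : ℝ) ^ n * (T.descFactorial n : ℝ) := h2
      _ ≤ ((1 - p) * T) ^ n * (T.descFactorial n : ℝ) :=
          mul_le_mul_of_nonneg_right h1 (by positivity)
      _ = ((1 - p) ^ n * (T.descFactorial n : ℝ)) * (T:ℝ) ^ n := by rw [mul_pow]; ring
  have h4 : ((T - k).descFactorial n : ℝ) ≤ (1 - p) ^ n * (T.descFactorial n : ℝ) :=
    le_of_mul_le_mul_right h3 hTn
  calc ((Nat.factorial (T - n) * (T - k).descFactorial n : ℕ) : ℝ)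
      = (Nat.factorial (T - n) : ℝ) * ((T - k).descFactorial n : ℝ) := by push_cast; ring
    _ ≤ (Nat.factorial (T - n) : ℝ) * ((1 - p) ^ n * (T.descFactorial n : ℝ)) :=
        mul_le_mul_of_nonneg_left h4 (by positivity)
    _ = (1 - p) ^ n * ((Nat.factorial (T - n) * T.descFactorial n : ℕ) : ℝ) := by
        push_cast; ring
    _ = (1 - p) ^ n * (Nat.factorial T : ℝ) := by
        rw [Nat.factorial_mul_descFactorial hnT]

/-- Quantile observation lemma (Lemma 4 of the paper): for an exchangeable
sequence `x_1, …, x_T` of random vectors in `ℝᵈ`, `δ, p ∈ (0,1)` and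
`n = ⌈log(d/δ)/p⌉`, with probability at least `1 − δ` every feature `i`
attains, among its first `n` observations, a value at least the
`(1−p)`-quantile (the `⌈Tp⌉`-th largest value) of `{|x_{ti}|}_{t=1}^T`. -/
theorem stmt_17 {Ω : Type*} [MeasurableSpace Ω] (μ : Measure Ω)
    [IsProbabilityMeasure μ] (T d : ℕ) (hd : 0 < d)
    (X : Fin T → Ω → (Fin d → ℝ)) (hmeas : ∀ t, Measurable (X t))
    (hexch : ∀ σ : Equiv.Perm (Fin T),
      Measure.map (fun ω => fun t => X (σ t) ω) μ =
        Measure.map (fun ω => fun t => X t ω) μ)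
    (δ p : ℝ) (hδ : δ ∈ Set.Ioo (0 : ℝ) 1) (hp : p ∈ Set.Ioo (0 : ℝ) 1)
    (n : ℕ) (hn : n = ⌈Real.log (d / δ) / p⌉₊) (hnT : n ≤ T) :
    ENNReal.ofReal (1 - δ) ≤
      μ {ω | ∀ i : Fin d,
        kthLargest T (fun t => |X t ω i|) ⌈(T : ℝ) * p⌉₊ ≤
          maxFirst T (fun t => X t ω i) n} := by
  classical
  obtain ⟨hδ0, hδ1⟩ := hδ
  obtain ⟨hp0, hp1⟩ := hp
  have hd0 : (0:ℝ) < d := by exact_mod_cast hd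
  have hd1 : (1:ℝ) ≤ d := by exact_mod_cast hd
  set k := ⌈(T : ℝ) * p⌉₊ with hk
  have hlogpos : 0 < Real.log ((d:ℝ) / δ) := Real.log_pos (by
    rw [lt_div_iff₀ hδ0]; nlinarith)
  have hn1 : 1 ≤ n := by
    rw [hn]
    exact Nat.ceil_pos.2 (by positivity)
  have hT : 0 < T := lt_of_lt_of_le hn1 hnT
  have hT0 : (0:ℝ) < T := by exact_mod_cast hT
  have hk1 : 1 ≤ k := Nat.ceil_pos.2 (by positivity)
  have hkT : k ≤ T := by
    rw [hk, Nat.ceil_le]; nlinarith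
  have hpk : (T:ℝ) * p ≤ k := Nat.le_ceil _
  set W : Ω → (Fin T → Fin d → ℝ) := fun ω => fun t => X t ω with hW
  have hWmeas : Measurable W := measurable_pi_lambda _ fun t => hmeas t
  set kA : (Fin T → Fin d → ℝ) → Fin d → ℝ :=
    fun w i => kthLargest T (fun t => |w t i|) k with hkA
  have hkAmeas : ∀ i, Measurable fun w => kA w i := fun i => meas_kth hk1 hkT i
  have hxmeas : ∀ (t : Fin T) (i : Fin d), Measurable fun w : Fin T → Fin d → ℝ => |w t i| :=
    fun t i => ((measurable_pi_apply i).comp (measurable_pi_apply t)).abs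
  set A : Fin d → Equiv.Perm (Fin T) → Set (Fin T → Fin d → ℝ) := fun i σ =>
    {w | ∀ t : Fin T, (t : ℕ) < n → |w (σ t) i| < kA w i} with hA
  have hAmeas : ∀ i σ, MeasurableSet (A i σ) := by
    intro i σ
    have : A i σ = ⋂ (t : Fin T), ⋂ (_ : (t:ℕ) < n),
        {w : Fin T → Fin d → ℝ | |w (σ t) i| < kA w i} := by
      ext w; simp [hA]
    rw [this]
    exact MeasurableSet.iInter fun t => MeasurableSet.iInter fun _ =>
      measurableSet_lt (hxmeas (σ t) i) (hkAmeas i)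
  set G : Set (Fin T → Fin d → ℝ) :=
    {w | ∀ i : Fin d, kA w i ≤ maxFirst T (fun t => w t i) n} with hG
  have hGmeas : MeasurableSet G := by
    have : G = ⋂ i : Fin d, {w : Fin T → Fin d → ℝ |
        kA w i ≤ maxFirst T (fun t => w t i) n} := by ext w; simp [hG]
    rw [this]
    exact MeasurableSet.iInter fun i => measurableSet_le (hkAmeas i) (meas_maxFirst n i)
  haveI : IsProbabilityMeasure (Measure.map W μ) :=
    Measure.isProbabilityMeasure_map hWmeas.aemeasurable
  -- per-σ invariance
  have hAeq : ∀ (i : Fin d) (σ : Equiv.Perm (Fin T)),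
      Measure.map W μ (A i σ) = Measure.map W μ (A i 1) := by
    intro i σ
    have hWσ : Measurable fun ω => fun t => X (σ t) ω :=
      measurable_pi_lambda _ fun t => hmeas (σ t)
    have h1 : Measure.map W μ (A i 1) = μ ((fun ω => fun t => X (σ t) ω) ⁻¹' (A i 1)) := by
      rw [← hexch σ, Measure.map_apply hWσ (hAmeas i 1)]
    have h2 : ((fun ω => fun t => X (σ t) ω) ⁻¹' (A i 1)) = W ⁻¹' (A i σ) := by
      ext ω
      simp only [Set.mem_preimage, hA, Set.mem_setOf_eq]
      have hkeq : kA (fun t => X (σ t) ω) i = kA (W ω) i :=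
        kth_perm (v := fun t => |X t ω i|) σ
      constructor
      · intro h t ht
        have := h t ht
        simp only [Equiv.Perm.one_apply] at this
        rw [hkeq] at this
        exact this
      · intro h t ht
        have := h t ht
        simp only [Equiv.Perm.one_apply]
        rw [hkeq]
        exact this
    rw [h1, h2, Measure.map_apply hWmeas (hAmeas i σ)]
  -- counting bound pointwise and integration
  set c : ℕ := Nat.factorial (T - n) * (T - k).descFactorial n with hc
  have hsum : ∀ i, (Nat.factorial T : ℝ≥0∞) * Measure.map W μ (A i 1) ≤ (c : ℝ≥0∞) := by
    intro i
    have hcardPerm : (Finset.univ : Finset (Equiv.Perm (Fin T))).card = Nat.factorial T := by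
      simp [Finset.card_univ, Fintype.card_perm, Fintype.card_fin]
    calc (Nat.factorial T : ℝ≥0∞) * Measure.map W μ (A i 1)
        = ∑ σ : Equiv.Perm (Fin T), Measure.map W μ (A i σ) := by
          rw [Finset.sum_congr rfl (fun σ _ => hAeq i σ), Finset.sum_const, hcardPerm,
            nsmul_eq_mul]
      _ = ∑ σ : Equiv.Perm (Fin T), ∫⁻ w, (A i σ).indicator (fun _ => (1:ℝ≥0∞)) w
            ∂(Measure.map W μ) := by
          exact Finset.sum_congr rfl fun σ _ => (lintegral_indicator_one (hAmeas i σ)).symm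
      _ = ∫⁻ w, ∑ σ : Equiv.Perm (Fin T), (A i σ).indicator (fun _ => (1:ℝ≥0∞)) w
            ∂(Measure.map W μ) := by
          rw [lintegral_finset_sum]
          exact fun σ _ => measurable_const.indicator (hAmeas i σ)
      _ ≤ ∫⁻ _, (c : ℝ≥0∞) ∂(Measure.map W μ) := by
          apply lintegral_mono
          intro w
          dsimp only
          have hpt : ∑ σ : Equiv.Perm (Fin T), (A i σ).indicator (fun _ => (1:ℝ≥0∞)) w
              = (((Finset.univ : Finset (Equiv.Perm (Fin T))).filter
                  fun σ => w ∈ A i σ).card : ℝ≥0∞) := by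
            rw [Finset.card_filter, Nat.cast_sum]
            refine Finset.sum_congr rfl fun σ _ => ?_
            rw [Set.indicator_apply]
            by_cases h : w ∈ A i σ <;> simp [h]
          rw [hpt]
          have hScard : k ≤ ((Finset.univ : Finset (Fin T)).filter
              fun t => kA w i ≤ |w t i|).card := by
            obtain ⟨b, hbe, hbN⟩ := kth_exists (fun t => |w t i|) hk1 hkT
            simp only [hkA, hbe]
            exact hbN
          have hsubset : ((Finset.univ : Finset (Equiv.Perm (Fin T))).filter
              fun σ => w ∈ A i σ) ⊆ ((Finset.univ : Finset (Equiv.Perm (Fin T))).filter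
                fun σ => ∀ t : Fin T, (t:ℕ) < n →
                  σ t ∉ ((Finset.univ : Finset (Fin T)).filter fun t => kA w i ≤ |w t i|)) := by
            intro σ hσ
            rw [Finset.mem_filter] at hσ ⊢
            refine ⟨Finset.mem_univ _, fun t ht => ?_⟩
            rw [Finset.mem_filter]
            rintro ⟨-, hle⟩
            exact absurd (hσ.2 t ht) (not_lt.2 hle)
          have hcount := (Finset.card_le_card hsubset).trans
            (count_perm_avoid hnT _ hScard)
          exact_mod_cast hcount
      _ = (c : ℝ≥0∞) := by simp
  -- from counting to δ/d
  have hbound : ∀ i, Measure.map W μ (A i 1) ≤ ENNReal.ofReal (δ / d) := by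
    intro i
    have hreal : (c : ℝ) ≤ (δ / d) * (Nat.factorial T : ℝ) := by
      have hcr := count_ratio_le T k n hT hnT hkT p hp1.le hpk
      have h5 : (1 - p : ℝ) ≤ Real.exp (-p) := by
        have := Real.add_one_le_exp (-p); linarith
      have h6 : (1-p)^n ≤ Real.exp (-p)^n := pow_le_pow_left₀ (by linarith) h5 n
      have h7 : Real.exp (-p)^n = Real.exp (-(p * n)) := by
        rw [← Real.exp_nat_mul]; ring_nf
      have h9 : Real.log ((d:ℝ)/δ) / p ≤ (n:ℝ) := by rw [hn]; exact Nat.le_ceil _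
      have h8 : Real.log ((d:ℝ)/δ) ≤ p * n := by
        calc Real.log ((d:ℝ)/δ) = (Real.log ((d:ℝ)/δ) / p) * p := by field_simp
          _ ≤ (n:ℝ) * p := mul_le_mul_of_nonneg_right h9 hp0.le
          _ = p * n := mul_comm _ _
      have h10 : Real.exp (-(p * n)) ≤ δ / d := by
        have hlogneg : Real.log (δ / d) = - Real.log ((d:ℝ)/δ) := by
          rw [← Real.log_inv]
          congr 1
          field_simp
        rw [← Real.exp_log (show (0:ℝ) < δ/d by positivity)]
        apply Real.exp_le_exp.2
        rw [hlogneg]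
        linarith
      have hexp : (1-p)^n ≤ δ / d := by
        calc (1-p)^n ≤ Real.exp (-p)^n := h6
          _ = Real.exp (-(p*n)) := h7
          _ ≤ δ / d := h10
      calc (c : ℝ) ≤ (1-p)^n * (Nat.factorial T : ℝ) := hcr
        _ ≤ (δ/d) * (Nat.factorial T : ℝ) :=
            mul_le_mul_of_nonneg_right hexp (by positivity)
    have hfacpos : (Nat.factorial T : ℝ≥0∞) ≠ 0 := by
      simp [Nat.factorial_ne_zero]
    have hfactop : (Nat.factorial T : ℝ≥0∞) ≠ ⊤ := ENNReal.natCast_ne_top _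
    have h1 : Measure.map W μ (A i 1) * (Nat.factorial T : ℝ≥0∞)
        ≤ ENNReal.ofReal (δ / d) * (Nat.factorial T : ℝ≥0∞) := by
      rw [mul_comm]
      refine (hsum i).trans ?_
      calc (c : ℝ≥0∞) = ENNReal.ofReal (c : ℝ) := by
            rw [ENNReal.ofReal_natCast]
        _ ≤ ENNReal.ofReal ((δ/d) * (Nat.factorial T : ℝ)) := ENNReal.ofReal_le_ofReal hreal
        _ = ENNReal.ofReal (δ/d) * (Nat.factorial T : ℝ≥0∞) := by
            rw [ENNReal.ofReal_mul (by positivity), ENNReal.ofReal_natCast]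
    exact (ENNReal.mul_le_mul_iff_left hfacpos hfactop).1 h1
  -- union bound and conclusion
  have hcompl : Gᶜ ⊆ ⋃ i : Fin d, A i 1 := by
    intro w hw
    simp only [Set.mem_compl_iff, hG, Set.mem_setOf_eq, not_forall, not_le] at hw
    obtain ⟨i, hi⟩ := hw
    refine Set.mem_iUnion.2 ⟨i, ?_⟩
    intro t ht
    simp only [Equiv.Perm.one_apply]
    have hle : |w t i| ≤ maxFirst T (fun t' => w t' i) n := by
      unfold maxFirst
      have hmem : t ∈ (Finset.univ : Finset (Fin T)).filter fun t : Fin T => (t:ℕ) < n :=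
        Finset.mem_filter.2 ⟨Finset.mem_univ t, ht⟩
      have := Finset.le_sup (f := fun t => (⟨|w t i|, abs_nonneg _⟩ : NNReal)) hmem
      exact_mod_cast this
    exact lt_of_le_of_lt hle hi
  have hGc : Measure.map W μ Gᶜ ≤ ENNReal.ofReal δ := by
    calc Measure.map W μ Gᶜ ≤ ∑ i : Fin d, Measure.map W μ (A i 1) :=
        (measure_mono hcompl).trans (measure_iUnion_fintype_le _ _)
      _ ≤ ∑ _i : Fin d, ENNReal.ofReal (δ / d) := Finset.sum_le_sum fun i _ => hbound i
      _ = (d : ℝ≥0∞) * ENNReal.ofReal (δ/d) := by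
          simp [Finset.sum_const, Finset.card_univ, nsmul_eq_mul]
      _ = ENNReal.ofReal δ := by
          rw [← ENNReal.ofReal_natCast, ← ENNReal.ofReal_mul (by positivity)]
          congr 1
          field_simp
  have htarget : {ω | ∀ i : Fin d,
      kthLargest T (fun t => |X t ω i|) ⌈(T : ℝ) * p⌉₊ ≤
        maxFirst T (fun t => X t ω i) n} = W ⁻¹' G := rfl
  rw [htarget, ← Measure.map_apply hWmeas hGmeas]
  have hGG : Measure.map W μ G = 1 - Measure.map W μ Gᶜ := by
    have h := prob_compl_eq_one_sub (μ := Measure.map W μ) hGmeas.compl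
    rw [compl_compl] at h
    exact h
  have hofr : ENNReal.ofReal (1 - δ) = 1 - ENNReal.ofReal δ := by
    rw [ENNReal.ofReal_sub _ hδ0.le, ENNReal.ofReal_one]
  rw [hGG, hofr]
  exact tsub_le_tsub_left hGc 1
end
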